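/- Let s be irrational with approximation exponent μ(s), let Λ_s = [[1,0],[s,1]]·ℤ², and let g_t = diag(e^{t/2}, e^{-t/2}). Then limsup_{t→∞} log α₁(g_{-t} Λ_s)/t = 1/2 - 1/μ(s). -/

import Mathlib

open MeasureTheory Filter Matrix Real ENNReal

noncomputable section

/-- `SL(n, ℝ)`. -/
abbrev SLR (n : ℕ) := Matrix.SpecialLinearGroup (Fin n) ℝ

instance (n : ℕ) : TopologicalSpace (SLR n) :=
  TopologicalSpace.induced (fun g => (g : Matrix (Fin n) (Fin n) ℝ)) inferInstance

/-- The image of `SL(n, ℤ)` in `SL(n, ℝ)`. -/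
def latticeGamma (n : ℕ) : Subgroup (SLR n) :=
  (Matrix.SpecialLinearGroup.map (n := Fin n) (Int.castRingHom ℝ)).range

/-- The space of unimodular lattices `X_n = SL(n,ℝ)/SL(n,ℤ)`. -/
abbrev LatticeSpace (n : ℕ) := SLR n ⧸ latticeGamma n

instance (n : ℕ) : MeasurableSpace (LatticeSpace n) := borel _

/-- The real vector `g · m` of the lattice `g ℤⁿ` coming from the integer vector `m`. -/
def vecOf (n : ℕ) (g : SLR n) (m : Fin n → ℤ) : Fin n → ℝ :=
  (g : Matrix (Fin n) (Fin n) ℝ).mulVec (fun i => (m i : ℝ))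

/-- Euclidean norm on `Fin n → ℝ`. -/
def eNorm {n : ℕ} (v : Fin n → ℝ) : ℝ := ‖(WithLp.equiv 2 (Fin n → ℝ)).symm v‖

/-- The lattice `Λ` contains a nonzero vector lying in `A`. -/
def Intersects (n : ℕ) (Λ : LatticeSpace n) (A : Set (Fin n → ℝ)) : Prop :=
  ∀ g : SLR n, (QuotientGroup.mk g : LatticeSpace n) = Λ →
    ∃ m : Fin n → ℤ, m ≠ 0 ∧ vecOf n g m ∈ A

/-- `α₁(Λ) = sup_{0 ≠ v ∈ Λ} 1/‖v‖` (Euclidean norm). -/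
def alpha1 (n : ℕ) (Λ : LatticeSpace n) : ℝ :=
  sSup {r : ℝ | ∃ g : SLR n, (QuotientGroup.mk g : LatticeSpace n) = Λ ∧
    ∃ m : Fin n → ℤ, m ≠ 0 ∧ r = 1 / eNorm (vecOf n g m)}

/-- The horocycle matrix `h_t = [[1,t],[0,1]]`. -/
def hMat (t : ℝ) : SLR 2 := ⟨!![1, t; 0, 1], by simp [Matrix.det_fin_two_of]⟩

/-- The matrix `[[1,0],[s,1]]`, so that `gMat s · ℤ² = Λ_s = {(m, sm+n)}`. -/
def gMat (s : ℝ) : SLR 2 := ⟨!![1, 0; s, 1], by simp [Matrix.det_fin_two_of]⟩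

/-- The point `Λ_s` of the space of lattices. -/
def LambdaS (s : ℝ) : LatticeSpace 2 := QuotientGroup.mk (gMat s)

/-- The approximation exponent `μ(s)`, valued in `[0,∞]`:
the sup of all `ν` such that `|s - p/q| < q^{-ν}` has infinitely many rational solutions. -/
def approxExp (s : ℝ) : ℝ≥0∞ :=
  ⨆ (ν : ℝ) (_ : {pq : ℤ × ℕ+ |
    |s - (pq.1 : ℝ) / ((pq.2 : ℕ) : ℝ)| < ((pq.2 : ℕ) : ℝ) ^ (-ν)}.Infinite),
    ENNReal.ofReal ν

/-- The diagonal matrix `diag(e^{t/2}, e^{-t/2})`. -/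
def aMat (t : ℝ) : SLR 2 := ⟨!![Real.exp (t / 2), 0; 0, Real.exp (-(t / 2))],
  by simp [Matrix.det_fin_two_of, ← Real.exp_add]⟩

/-! The lattice `g_{-t} Λ_s` consists of the vectors `(e^{-t/2} q, e^{t/2} (s q + p))`.
A good approximation `|s q - p| < q^{1-ν}` produces, at time `t = ν log q`, a lattice vector of
length at most `√2 e^{(1/ν - 1/2) t}`. Conversely, if there are only finitely many such
approximations, then for large `t` every nonzero vector has length at least `e^{(1/ν - 1/2) t}`:
either `|q| ≥ e^{t/ν}` and the first coordinate is long, or the second one is. So `1/2 - 1/ν`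
bounds the limsup from below for `ν < μ(s)` and from above for `ν > μ(s)`, and Dirichlet's
theorem gives `μ(s) ≥ 2`. -/

section LatticeVectors

variable {n : ℕ}

lemma abs_le_eNorm (v : Fin n → ℝ) (i : Fin n) : |v i| ≤ eNorm v :=
  PiLp.norm_apply_le ((WithLp.equiv 2 (Fin n → ℝ)).symm v) i

lemma eNorm_le_of_forall_abs_le {v : Fin n → ℝ} {r : ℝ} (hr : 0 ≤ r) (h : ∀ i, |v i| ≤ r) :
    eNorm v ≤ √n * r := by
  rw [eNorm, EuclideanSpace.norm_eq, ← Real.sqrt_sq hr, ← Real.sqrt_mul (Nat.cast_nonneg n)]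
  refine Real.sqrt_le_sqrt ?_
  calc ∑ i, ‖v i‖ ^ 2 ≤ ∑ _i : Fin n, r ^ 2 :=
        Finset.sum_le_sum fun i _ => pow_le_pow_left₀ (norm_nonneg _) (h i) 2
    _ = n * r ^ 2 := by simp

lemma vecOf_mul_map (g : SLR n) (δ : Matrix.SpecialLinearGroup (Fin n) ℤ) (m : Fin n → ℤ) :
    vecOf n (g * Matrix.SpecialLinearGroup.map (Int.castRingHom ℝ) δ) m
      = vecOf n g ((δ : Matrix (Fin n) (Fin n) ℤ) *ᵥ m) := by
  ext i
  simp only [vecOf, Matrix.SpecialLinearGroup.coe_mul, ← Matrix.mulVec_mulVec]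
  congr 1
  ext j
  simp [Matrix.SpecialLinearGroup.map_apply_coe, Matrix.mulVec, dotProduct, Matrix.map_apply]

lemma alpha1_mk (g : SLR n) :
    alpha1 n (QuotientGroup.mk g) =
      sSup {r : ℝ | ∃ m : Fin n → ℤ, m ≠ 0 ∧ r = 1 / eNorm (vecOf n g m)} := by
  rw [alpha1]
  congr 1
  ext r
  constructor
  · rintro ⟨g', hg', m, hm, rfl⟩
    obtain ⟨δ, hδ⟩ := QuotientGroup.eq.mp hg'.symm
    have hg'_eq : g' = g * Matrix.SpecialLinearGroup.map (Int.castRingHom ℝ) δ := by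
      rw [hδ, mul_inv_cancel_left]
    refine ⟨(δ : Matrix (Fin n) (Fin n) ℤ) *ᵥ m, fun h => hm ?_, by rw [hg'_eq, vecOf_mul_map]⟩
    have := congrArg (((δ⁻¹ : Matrix.SpecialLinearGroup (Fin n) ℤ) :
      Matrix (Fin n) (Fin n) ℤ) *ᵥ ·) h
    rwa [Matrix.mulVec_mulVec, ← Matrix.SpecialLinearGroup.coe_mul, inv_mul_cancel,
      Matrix.SpecialLinearGroup.coe_one, Matrix.one_mulVec, Matrix.mulVec_zero] at this
  · rintro ⟨m, hm, rfl⟩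
    exact ⟨g, rfl, m, hm, rfl⟩

lemma alpha1_mk_le {g : SLR n} {b : ℝ} (hb : 0 < b)
    (h : ∀ m : Fin n → ℤ, m ≠ 0 → b ≤ eNorm (vecOf n g m)) :
    alpha1 n (QuotientGroup.mk g) ≤ 1 / b := by
  rw [alpha1_mk]
  refine Real.sSup_le ?_ (by positivity)
  rintro r ⟨m, hm, rfl⟩
  exact one_div_le_one_div_of_le hb (h m hm)

lemma one_div_le_alpha1_mk {g : SLR n} {b : ℝ} (hb : 0 < b)
    (h : ∀ m : Fin n → ℤ, m ≠ 0 → b ≤ eNorm (vecOf n g m)) {m : Fin n → ℤ} (hm : m ≠ 0) :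
    1 / eNorm (vecOf n g m) ≤ alpha1 n (QuotientGroup.mk g) := by
  rw [alpha1_mk]
  refine le_csSup ⟨1 / b, ?_⟩ ⟨m, hm, rfl⟩
  rintro r ⟨m', hm', rfl⟩
  exact one_div_le_one_div_of_le hb (h m' hm')

end LatticeVectors

lemma exists_pnat_abs_mul_sub_eq (s : ℝ) {a : ℤ} (ha : a ≠ 0) (b : ℤ) :
    ∃ (q : ℕ+) (p : ℤ), (q : ℝ) = |(a : ℝ)| ∧ |s * q - p| = |s * a + b| := by
  refine ⟨⟨a.natAbs, Int.natAbs_pos.2 ha⟩, ?_⟩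
  simp only [PNat.mk_coe, Nat.cast_natAbs, Int.cast_abs, true_and]
  rcases abs_choice (a : ℝ) with h | h
  · exact ⟨-b, by rw [h]; push_cast; ring_nf⟩
  · exact ⟨b, by rw [h, ← abs_neg]; ring_nf⟩

section GeodesicOrbit

variable {s t : ℝ}

def alpha1Orbit (s t : ℝ) : ℝ := alpha1 2 (QuotientGroup.mk (aMat (-t) * gMat s))

lemma vecOf_aMat_neg_mul_gMat (s t : ℝ) (m : Fin 2 → ℤ) :
    vecOf 2 (aMat (-t) * gMat s) m = ![exp (-(t / 2)) * m 0, exp (t / 2) * (s * m 0 + m 1)] := by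
  ext i
  rw [vecOf, Matrix.SpecialLinearGroup.coe_mul]
  fin_cases i <;>
    simp [aMat, gMat, Matrix.mulVec, dotProduct, Fin.sum_univ_two, Matrix.mul_apply, neg_div]
  ring

lemma exp_le_eNorm_vecOf {κ : ℝ} (ht : 0 ≤ t) (hκ : κ ≤ 1)
    (hdio : ∀ (q : ℕ+) (p : ℤ), (q : ℝ) < exp (κ * t) → exp ((κ - 1) * t) ≤ |s * q - p|)
    {m : Fin 2 → ℤ} (hm : m ≠ 0) :
    exp ((κ - 1 / 2) * t) ≤ eNorm (vecOf 2 (aMat (-t) * gMat s) m) := by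
  have hfst := abs_le_eNorm (vecOf 2 (aMat (-t) * gMat s) m) 0
  have hsnd := abs_le_eNorm (vecOf 2 (aMat (-t) * gMat s) m) 1
  set N := eNorm (vecOf 2 (aMat (-t) * gMat s) m)
  simp only [vecOf_aMat_neg_mul_gMat, Matrix.cons_val_zero, Matrix.cons_val_one, abs_mul,
    abs_of_pos (exp_pos _)] at hfst hsnd
  by_cases hm0 : m 0 = 0
  · have hm1 : (1 : ℝ) ≤ |(m 1 : ℝ)| := by
      have : m 1 ≠ 0 := fun hm1 => hm (by ext i; fin_cases i <;> simp [hm0, hm1])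
      exact_mod_cast Int.one_le_abs this
    simp only [hm0, Int.cast_zero, mul_zero, zero_add] at hsnd
    calc exp ((κ - 1 / 2) * t) ≤ exp (t / 2) := exp_le_exp.2 (by nlinarith)
      _ ≤ exp (t / 2) * |(m 1 : ℝ)| := le_mul_of_one_le_right (exp_pos _).le hm1
      _ ≤ _ := hsnd
  obtain ⟨q, p, hq, hqp⟩ := exists_pnat_abs_mul_sub_eq s hm0 (m 1)
  rcases lt_or_ge (q : ℝ) (exp (κ * t)) with hsmall | hlarge
  · calc exp ((κ - 1 / 2) * t) = exp (t / 2) * exp ((κ - 1) * t) := by rw [← exp_add]; ring_nf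
      _ ≤ exp (t / 2) * |s * m 0 + m 1| :=
          mul_le_mul_of_nonneg_left (hqp ▸ hdio q p hsmall) (exp_pos _).le
      _ ≤ _ := hsnd
  · calc exp ((κ - 1 / 2) * t) = exp (-(t / 2)) * exp (κ * t) := by rw [← exp_add]; ring_nf
      _ ≤ exp (-(t / 2)) * |(m 0 : ℝ)| := mul_le_mul_of_nonneg_left (hq ▸ hlarge) (exp_pos _).le
      _ ≤ _ := hfst

lemma exp_neg_half_le_eNorm_vecOf (ht : 0 ≤ t) {m : Fin 2 → ℤ} (hm : m ≠ 0) :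
    exp (-(t / 2)) ≤ eNorm (vecOf 2 (aMat (-t) * gMat s) m) := by
  have hdio : ∀ (q : ℕ+) (p : ℤ), (q : ℝ) < exp (0 * t) → exp ((0 - 1) * t) ≤ |s * q - p| :=
    fun q _ hq => absurd hq (by simp)
  convert exp_le_eNorm_vecOf ht zero_le_one hdio hm using 2
  ring

lemma log_alpha1Orbit_ge {κ : ℝ} (ht : 0 ≤ t) {q : ℕ+} {p : ℤ} (hq : (q : ℝ) ≤ exp (κ * t))
    (hp : |s * q - p| ≤ exp ((κ - 1) * t)) :
    (1 / 2 - κ) * t - log √2 ≤ log (alpha1Orbit s t) := by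
  set m : Fin 2 → ℤ := ![(q : ℤ), -p]
  have hm : m ≠ 0 := fun h => by simpa [m] using congrFun h 0
  have hnorm : eNorm (vecOf 2 (aMat (-t) * gMat s) m) ≤ √2 * exp ((κ - 1 / 2) * t) := by
    have hcoord : ∀ i, |vecOf 2 (aMat (-t) * gMat s) m i| ≤ exp ((κ - 1 / 2) * t) := by
      refine Fin.forall_fin_two.2 ⟨?_, ?_⟩ <;>
        simp only [vecOf_aMat_neg_mul_gMat, m, Matrix.cons_val_zero, Matrix.cons_val_one, abs_mul,
          abs_of_pos (exp_pos _), Int.cast_natCast, Int.cast_neg, Nat.abs_cast, ← sub_eq_add_neg]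
      · calc exp (-(t / 2)) * q ≤ exp (-(t / 2)) * exp (κ * t) :=
            mul_le_mul_of_nonneg_left hq (exp_pos _).le
          _ = exp ((κ - 1 / 2) * t) := by rw [← exp_add]; ring_nf
      · calc exp (t / 2) * |s * q - p| ≤ exp (t / 2) * exp ((κ - 1) * t) :=
            mul_le_mul_of_nonneg_left hp (exp_pos _).le
          _ = exp ((κ - 1 / 2) * t) := by rw [← exp_add]; ring_nf
    simpa using eNorm_le_of_forall_abs_le (exp_pos _).le hcoord
  have hα : 1 / (√2 * exp ((κ - 1 / 2) * t)) ≤ alpha1Orbit s t :=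
    calc 1 / (√2 * exp ((κ - 1 / 2) * t)) ≤ 1 / eNorm (vecOf 2 (aMat (-t) * gMat s) m) :=
          one_div_le_one_div_of_le ((exp_pos _).trans_le (exp_neg_half_le_eNorm_vecOf ht hm)) hnorm
      _ ≤ alpha1Orbit s t :=
          one_div_le_alpha1_mk (exp_pos _) (fun _ => exp_neg_half_le_eNorm_vecOf ht) hm
  calc (1 / 2 - κ) * t - log √2 = Real.log (1 / (√2 * exp ((κ - 1 / 2) * t))) := by
        rw [Real.log_div one_ne_zero (by positivity), Real.log_one,
          Real.log_mul (by positivity) (exp_pos _).ne', log_exp]; ring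
    _ ≤ log (alpha1Orbit s t) := log_le_log (by positivity) hα

lemma exp_neg_half_le_alpha1Orbit (ht : 0 ≤ t) : exp (-(t / 2)) ≤ alpha1Orbit s t := by
  have hm : (![0, 1] : Fin 2 → ℤ) ≠ 0 := fun h => by simpa using congrFun h 1
  have hnorm : eNorm (vecOf 2 (aMat (-t) * gMat s) ![0, 1]) = exp (t / 2) := by
    simp [vecOf_aMat_neg_mul_gMat, eNorm, EuclideanSpace.norm_eq, sqrt_sq (exp_pos _).le]
  have := one_div_le_alpha1_mk (exp_pos _) (fun _ => exp_neg_half_le_eNorm_vecOf (s := s) ht) hm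
  rw [hnorm, one_div, ← exp_neg] at this
  exact this

lemma alpha1Orbit_pos (ht : 0 ≤ t) : 0 < alpha1Orbit s t :=
  (exp_pos _).trans_le (exp_neg_half_le_alpha1Orbit ht)

lemma log_alpha1Orbit_le {κ : ℝ} (ht : 0 ≤ t) (hκ : κ ≤ 1)
    (hdio : ∀ (q : ℕ+) (p : ℤ), (q : ℝ) < exp (κ * t) → exp ((κ - 1) * t) ≤ |s * q - p|) :
    log (alpha1Orbit s t) ≤ (1 / 2 - κ) * t := by
  have hα := alpha1_mk_le (exp_pos _) fun m hm => exp_le_eNorm_vecOf ht hκ hdio hm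
  rw [one_div, ← exp_neg] at hα
  calc log (alpha1Orbit s t) ≤ log (exp (-((κ - 1 / 2) * t))) := log_le_log (alpha1Orbit_pos ht) hα
    _ = (1 / 2 - κ) * t := by rw [log_exp]; ring

def orbitRate (s t : ℝ) : ℝ := log (alpha1Orbit s t) / t

lemma abs_orbitRate_le (ht : 0 ≤ t) : |orbitRate s t| ≤ 1 / 2 := by
  rcases ht.eq_or_lt with rfl | htpos
  · simp [orbitRate]
  have hpos := alpha1Orbit_pos (s := s) ht
  have hupper : alpha1Orbit s t ≤ exp (t / 2) := by
    refine (alpha1_mk_le (exp_pos _) fun m hm => exp_neg_half_le_eNorm_vecOf ht hm).trans_eq ?_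
    rw [one_div, ← exp_neg, neg_neg]
  rw [orbitRate, abs_div, abs_of_pos htpos, div_le_iff₀ htpos, abs_le]
  constructor
  · calc -(1 / 2 * t) = log (exp (-(t / 2))) := by rw [log_exp]; ring
      _ ≤ log (alpha1Orbit s t) := log_le_log (exp_pos _) (exp_neg_half_le_alpha1Orbit ht)
  · calc log (alpha1Orbit s t) ≤ log (exp (t / 2)) := log_le_log hpos hupper
      _ = 1 / 2 * t := by rw [log_exp]; ring

end GeodesicOrbit

lemma finite_setOf_abs_sub_intCast_lt (a r : ℝ) : {p : ℤ | |a - p| < r}.Finite := by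
  refine (Set.finite_Icc ⌊a - r⌋ ⌈a + r⌉).subset fun p (hp : |a - p| < r) => ?_
  obtain ⟨h₁, h₂⟩ := abs_sub_lt_iff.1 hp
  exact ⟨Int.floor_le_iff.2 (by linarith), Int.le_ceil_iff.2 (by linarith)⟩

section ApproximationExponent

variable {s ν : ℝ}

def approxSet (s ν : ℝ) : Set (ℤ × ℕ+) :=
  {pq : ℤ × ℕ+ | |s - (pq.1 : ℝ) / ((pq.2 : ℕ) : ℝ)| < ((pq.2 : ℕ) : ℝ) ^ (-ν)}

lemma mem_approxSet_iff {p : ℤ} {q : ℕ+} :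
    (p, q) ∈ approxSet s ν ↔ |s * q - p| < (q : ℝ) ^ (1 - ν) := by
  have hq : (0 : ℝ) < q := by exact_mod_cast q.pos
  have hrhs : (q : ℝ) ^ (1 - ν) = (q : ℝ) ^ (-ν) * q := by
    rw [sub_eq_neg_add, Real.rpow_add hq, Real.rpow_one]
  have hlhs : s * q - p = (s - p / q) * q := by field_simp
  rw [hrhs, hlhs, abs_mul, abs_of_pos hq, mul_lt_mul_iff_of_pos_right hq]
  rfl

lemma approxSet_anti (s : ℝ) : Antitone (approxSet s) := by
  rintro ν ν' hν ⟨p, q⟩ hpq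
  exact hpq.trans_le (rpow_le_rpow_of_exponent_le (Nat.one_le_cast.2 q.pos) (neg_le_neg hν))

lemma le_approxExp_of_infinite (h : (approxSet s ν).Infinite) : ENNReal.ofReal ν ≤ approxExp s :=
  le_iSup₂ (f := fun ν (_ : (approxSet s ν).Infinite) => ENNReal.ofReal ν) ν h

lemma approxSet_infinite_of_lt (h : ENNReal.ofReal ν < approxExp s) :
    (approxSet s ν).Infinite := by
  obtain ⟨ν', h'⟩ := lt_iSup_iff.1 h
  obtain ⟨hinf, hlt⟩ := lt_iSup_iff.1 h'
  exact hinf.mono (approxSet_anti s (ENNReal.ofReal_lt_ofReal_iff'.1 hlt).1.le)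

lemma approxSet_finite_of_lt (h : approxExp s < ENNReal.ofReal ν) : (approxSet s ν).Finite :=
  Set.not_infinite.1 fun hinf => h.not_ge (le_approxExp_of_infinite hinf)

lemma two_le_approxExp (hs : Irrational s) : 2 ≤ approxExp s := by
  let f : ℚ → ℤ × ℕ+ := fun r => (r.num, ⟨r.den, r.pos⟩)
  have hf : Function.Injective f := fun a b hab =>
    Rat.ext (congrArg Prod.fst hab) (congrArg (fun x : ℤ × ℕ+ => (x.2 : ℕ)) hab)
  have hinf : (approxSet s 2).Infinite := by
    refine ((Real.infinite_rat_abs_sub_lt_one_div_den_sq_of_irrational hs).image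
      hf.injOn).mono ?_
    rintro _ ⟨r, hr, rfl⟩
    have hden : ((r.den : ℝ)) ^ (-(2 : ℝ)) = 1 / (r.den : ℝ) ^ 2 := by
      rw [Real.rpow_neg (by positivity), Real.rpow_two, one_div]
    simpa [approxSet, f, hden, ← Rat.cast_def] using hr
  simpa using le_approxExp_of_infinite hinf

lemma exists_mem_approxSet_lt (hinf : (approxSet s ν).Infinite) (Q : ℕ) :
    ∃ pq ∈ approxSet s ν, Q < (pq.2 : ℕ) := by
  by_contra! h
  set B := {q : ℕ+ | (q : ℕ) ≤ Q}
  have hB : B.Finite := (Set.finite_le_nat Q).preimage PNat.coe_injective.injOn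
  refine hinf (((hB.biUnion fun q _ =>
    finite_setOf_abs_sub_intCast_lt (s * q) ((q : ℝ) ^ (1 - ν))).prod hB).subset ?_)
  rintro ⟨p, q⟩ hpq
  exact ⟨Set.mem_biUnion (h _ hpq) (mem_approxSet_iff.1 hpq), h _ hpq⟩

end ApproximationExponent

section Limsup

variable {s ν : ℝ}

lemma log_alpha1Orbit_ge_of_mem_approxSet (hν : 0 < ν) {p : ℤ} {q : ℕ+}
    (hpq : (p, q) ∈ approxSet s ν) :
    (1 / 2 - ν⁻¹) * (ν * Real.log q) - log √2 ≤ log (alpha1Orbit s (ν * Real.log q)) := by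
  have hq : (0 : ℝ) < q := by exact_mod_cast q.pos
  have hqt : (q : ℝ) = exp (ν⁻¹ * (ν * Real.log q)) := by
    rw [inv_mul_cancel_left₀ hν.ne', exp_log hq]
  refine log_alpha1Orbit_ge (mul_nonneg hν.le (Real.log_nonneg (Nat.one_le_cast.2 q.pos)))
    hqt.le ((mem_approxSet_iff.1 hpq).le.trans_eq ?_)
  rw [Real.rpow_def_of_pos hq]
  congr 1
  field_simp

lemma frequently_log_alpha1Orbit_ge (hν : 0 < ν) (hinf : (approxSet s ν).Infinite) :
    ∃ᶠ t in atTop, (1 / 2 - ν⁻¹) * t - log √2 ≤ log (alpha1Orbit s t) := by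
  refine frequently_atTop.2 fun T => ?_
  obtain ⟨⟨p, q⟩, hpq, hQ⟩ := exists_mem_approxSet_lt hinf ⌈exp (T / ν)⌉₊
  refine ⟨ν * Real.log q, ?_, log_alpha1Orbit_ge_of_mem_approxSet hν hpq⟩
  have hTq : exp (T / ν) ≤ q := (Nat.le_ceil _).trans (by exact_mod_cast hQ.le)
  rw [← div_le_iff₀' hν, ← exp_le_exp, exp_log (by exact_mod_cast q.pos)]
  exact hTq

lemma eventually_exp_le_abs_mul_sub (hs : Irrational s) (hν : 1 < ν)
    (hfin : (approxSet s ν).Finite) :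
    ∀ᶠ t in atTop, ∀ (q : ℕ+) (p : ℤ),
      (q : ℝ) < exp (ν⁻¹ * t) → exp ((ν⁻¹ - 1) * t) ≤ |s * q - p| := by
  have hdecay : Tendsto (fun t => exp ((ν⁻¹ - 1) * t)) atTop (nhds 0) :=
    tendsto_exp_atBot.comp (tendsto_id.const_mul_atTop_of_neg
      (sub_neg.2 (inv_lt_one_of_one_lt₀ hν)))
  have hexc : ∀ᶠ t in atTop, ∀ pq ∈ approxSet s ν,
      exp ((ν⁻¹ - 1) * t) ≤ |s * (pq.2 : ℕ) - pq.1| := by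
    refine hfin.eventually_all.2 fun pq _ => (hdecay.eventually (gt_mem_nhds ?_)).mono
      fun _ h => h.le
    exact abs_pos.2 (sub_ne_zero.2 ((hs.mul_natCast pq.2.ne_zero).ne_int _))
  filter_upwards [hexc] with t hexc q p hq
  by_cases hpq : (p, q) ∈ approxSet s ν
  · exact hexc _ hpq
  calc exp ((ν⁻¹ - 1) * t) = exp (ν⁻¹ * t) ^ (1 - ν) := by
        rw [← Real.exp_mul]; congr 1; field_simp
    _ ≤ (q : ℝ) ^ (1 - ν) :=
        (Real.rpow_lt_rpow_of_neg (by exact_mod_cast q.pos) hq (by linarith)).le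
    _ ≤ |s * q - p| := not_lt.1 (mem_approxSet_iff.not.1 hpq)

lemma isBoundedUnder_le_orbitRate (s : ℝ) : IsBoundedUnder (· ≤ ·) atTop (orbitRate s) :=
  isBoundedUnder_of_eventually_le <|
    (eventually_ge_atTop 0).mono fun _ ht => (abs_le.1 (abs_orbitRate_le ht)).2

lemma isCoboundedUnder_le_orbitRate (s : ℝ) : IsCoboundedUnder (· ≤ ·) atTop (orbitRate s) :=
  isCoboundedUnder_le_of_eventually_le atTop <|
    (eventually_ge_atTop 0).mono fun _ ht => (abs_le.1 (abs_orbitRate_le ht)).1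

lemma limsup_orbitRate_le_half (s : ℝ) : limsup (orbitRate s) atTop ≤ 1 / 2 :=
  limsup_le_of_le (isCoboundedUnder_le_orbitRate s) <|
    (eventually_ge_atTop 0).mono fun _ ht => (abs_le.1 (abs_orbitRate_le ht)).2

lemma le_limsup_orbitRate (hν : 0 < ν) (hinf : (approxSet s ν).Infinite) :
    1 / 2 - ν⁻¹ ≤ limsup (orbitRate s) atTop := by
  refine le_of_forall_pos_le_add fun ε hε => ?_
  have hlarge : ∀ᶠ t in atTop, 0 < t ∧ log √2 ≤ ε * t :=
    (eventually_gt_atTop 0).and <| (eventually_ge_atTop (log √2 / ε)).mono fun t ht =>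
      (div_le_iff₀' hε).1 ht
  have hfreq : ∃ᶠ t in atTop, 1 / 2 - ν⁻¹ - ε ≤ orbitRate s t := by
    refine ((frequently_log_alpha1Orbit_ge hν hinf).and_eventually hlarge).mono ?_
    rintro t ⟨hlog, htpos, hsmall⟩
    rw [orbitRate, le_div_iff₀ htpos]
    linarith
  linarith [le_limsup_of_frequently_le hfreq (isBoundedUnder_le_orbitRate s)]

lemma limsup_orbitRate_le (hs : Irrational s) (hν : 1 < ν) (hfin : (approxSet s ν).Finite) :
    limsup (orbitRate s) atTop ≤ 1 / 2 - ν⁻¹ := by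
  refine limsup_le_of_le (isCoboundedUnder_le_orbitRate s) ?_
  filter_upwards [eventually_exp_le_abs_mul_sub hs hν hfin, eventually_gt_atTop 0]
    with t hdio htpos
  rw [orbitRate, div_le_iff₀ htpos]
  exact log_alpha1Orbit_le htpos.le (inv_le_one_of_one_le₀ hν.le) hdio

end Limsup

lemma ofReal_eq_inv_two_sub_inv {L : ℝ} {μ : ℝ≥0∞} (hμ : 2 ≤ μ) (hL : L ≤ 1 / 2)
    (hlow : ∀ ν : ℝ, 0 < ν → ENNReal.ofReal ν < μ → 1 / 2 - ν⁻¹ ≤ L)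
    (hup : ∀ ν : ℝ, 1 < ν → μ < ENNReal.ofReal ν → L ≤ 1 / 2 - ν⁻¹) :
    ENNReal.ofReal L = 2⁻¹ - μ⁻¹ := by
  have hμinv : μ⁻¹ ≤ 2⁻¹ := ENNReal.inv_le_inv.2 hμ
  have hhalf : (2⁻¹ : ℝ≥0∞) = ENNReal.ofReal (1 / 2) := by
    rw [one_div, ENNReal.ofReal_inv_of_pos two_pos, ENNReal.ofReal_ofNat]
  obtain ⟨a, ha0, ha⟩ : ∃ a : ℝ, 0 ≤ a ∧ μ⁻¹ = ENNReal.ofReal a :=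
    ⟨_, ENNReal.toReal_nonneg, (ENNReal.ofReal_toReal (ne_top_of_le_ne_top (by simp) hμinv)).symm⟩
  have ha_half : a ≤ 1 / 2 := by
    rwa [ha, hhalf, ENNReal.ofReal_le_ofReal_iff (by norm_num)] at hμinv
  -- Put `ν = κ⁻¹` and let `κ` approach `a = μ⁻¹` from above and from below.
  have hlower : 1 / 2 - a ≤ L := by
    refine sub_le_comm.1 (le_of_forall_gt_imp_ge_of_dense fun κ hκ => sub_le_comm.1 ?_)
    have hκ0 : 0 < κ := ha0.trans_lt hκ
    refine inv_inv κ ▸ hlow κ⁻¹ (inv_pos.2 hκ0) ?_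
    rw [ENNReal.ofReal_inv_of_pos hκ0, ← ENNReal.inv_lt_iff_inv_lt, ha]
    exact (ENNReal.ofReal_lt_ofReal_iff hκ0).2 hκ
  have hupper : L ≤ 1 / 2 - a := by
    refine le_sub_comm.1 (le_of_forall_lt_imp_le_of_dense fun κ hκ => ?_)
    rcases le_or_gt κ 0 with hκ0 | hκ0
    · linarith
    refine le_sub_comm.1 (inv_inv κ ▸ hup κ⁻¹ ((one_lt_inv₀ hκ0).2 (by linarith)) ?_)
    rw [ENNReal.ofReal_inv_of_pos hκ0, ← ENNReal.lt_inv_iff_lt_inv, ha]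
    exact ENNReal.ofReal_lt_ofReal_iff'.2 ⟨hκ, hκ0.trans hκ⟩
  rw [le_antisymm hupper hlower, ha, hhalf, ENNReal.ofReal_sub _ ha0]

/-- For irrational `s`, `limsup_{t→∞} log α₁(g_{-t} Λ_s)/t = 1/2 - 1/μ(s)`
(interpreted as `1/2` when `μ(s) = ∞`). -/
theorem geodesic_diophantine (s : ℝ) (hs : Irrational s) :
    ENNReal.ofReal (Filter.limsup
        (fun t : ℝ => Real.log (alpha1 2 (QuotientGroup.mk (aMat (-t) * gMat s))) / t)
        atTop) = 2⁻¹ - (approxExp s)⁻¹ :=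
  ofReal_eq_inv_two_sub_inv (two_le_approxExp hs) (limsup_orbitRate_le_half s)
    (fun _ hν h => le_limsup_orbitRate hν (approxSet_infinite_of_lt h))
    (fun _ hν h => limsup_orbitRate_le hs hν (approxSet_finite_of_lt h))
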